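/- Fix integers d_l ≥ 2, d_r ≥ 3, d_g ≥ 2, a real β > 0 and ε ∈ [0,1]. If (x₁, x₂) ∈ [0,1]² is a fixed point of the DE map T_ε with 0 < x₁ < 1, then x₂ = x₁·(1 − (1−x₁)^{d_r−1}) and ε = 1 + ln( x₁ / (1 − (1−x₁)^{d_r−1})^{d_l−1} ) / ( β·(1 − x₂)^{d_g−1} ); that is, every nontrivial fixed point lies on the parametric curve (x, x₂(x); ε(x)). -/

import Mathlib

/-- Density-evolution map of the `(d_l, d_r, d_g)` precoded-rateless code
with parameter `β > 0` over BEC(`ε`). -/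
noncomputable def DEmap (dl dr dg : ℕ) (β ε : ℝ) (p : ℝ × ℝ) : ℝ × ℝ :=
  ((1 - (1 - p.1)^(dr-1))^(dl-1) * Real.exp (-β*(1-ε)*(1-p.2)^(dg-1)),
   (1 - (1 - p.1)^(dr-1))^dl * Real.exp (-β*(1-ε)*(1-p.2)^(dg-1)))

/-! At a fixed point `(x₁, x₂)` the two components of `T_ε` share the factor
`exp(-β(1-ε)(1-x₂)^(d_g-1))` and differ by one power of `A = 1 - (1-x₁)^(d_r-1)`,
so `x₂ = A x₁`. The first component then reads `A^(d_l-1) · exp(…) = x₁`; since `A > 0`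
for `0 < x₁ < 1`, taking logarithms solves it for `ε`. -/

open Real

lemma eq_one_add_log_div_of_mul_exp_eq {a x β D ε : ℝ} (ha : 0 < a) (hβ : β ≠ 0) (hD : D ≠ 0)
    (h : a * exp (-β * (1 - ε) * D) = x) : ε = 1 + log (x / a) / (β * D) := by
  have hlog : log (x / a) = -β * (1 - ε) * D := by
    rw [← h, mul_div_cancel_left₀ _ ha.ne', log_exp]
  rw [hlog]
  field_simp
  ring

lemma one_sub_one_sub_pow_pos {x : ℝ} {n : ℕ} (hx0 : 0 < x) (hx1 : x ≤ 1) (hn : n ≠ 0) :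
    0 < 1 - (1 - x) ^ n :=
  sub_pos.2 (pow_lt_one₀ (sub_nonneg.2 hx1) (by linarith) hn)

lemma one_sub_one_sub_pow_le_one {x : ℝ} (n : ℕ) (hx1 : x ≤ 1) : 1 - (1 - x) ^ n ≤ 1 :=
  sub_le_self _ (pow_nonneg (sub_nonneg.2 hx1) n)

lemma DEmap_snd_eq_mul_fst (dl dr dg : ℕ) (β ε : ℝ) (hdl : 1 ≤ dl) (p : ℝ × ℝ) :
    (DEmap dl dr dg β ε p).2 = (1 - (1 - p.1) ^ (dr - 1)) * (DEmap dl dr dg β ε p).1 := by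
  obtain ⟨k, rfl⟩ := Nat.exists_eq_add_of_le' hdl
  simp only [DEmap, Nat.add_sub_cancel, pow_succ]
  ring

theorem stmt_14_general (dl dr dg : ℕ) (hdl : 2 ≤ dl) (hdr : 3 ≤ dr)
    (β : ℝ) (hβ : 0 < β) (ε : ℝ)
    (x₁ x₂ : ℝ)
    (hfix : DEmap dl dr dg β ε (x₁, x₂) = (x₁, x₂))
    (hx₁0 : 0 < x₁) (hx₁1 : x₁ < 1) :
    x₂ = x₁ * (1 - (1 - x₁)^(dr-1)) ∧
    ε = 1 + Real.log (x₁ / (1 - (1 - x₁)^(dr-1))^(dl-1))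
          / (β * (1 - x₁ * (1 - (1 - x₁)^(dr-1)))^(dg-1)) := by
  have hx₂ : x₂ = x₁ * (1 - (1 - x₁) ^ (dr - 1)) := by
    simpa [hfix, mul_comm] using DEmap_snd_eq_mul_fst dl dr dg β ε (by omega) (x₁, x₂)
  have hA : 0 < 1 - (1 - x₁) ^ (dr - 1) := one_sub_one_sub_pow_pos hx₁0 hx₁1.le (by omega)
  have hx₂1 : x₂ < 1 := hx₂ ▸
    mul_lt_one_of_nonneg_of_lt_one_left hx₁0.le hx₁1 (one_sub_one_sub_pow_le_one _ hx₁1.le)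
  refine ⟨hx₂, eq_one_add_log_div_of_mul_exp_eq (pow_pos hA _) hβ.ne'
    (pow_ne_zero _ (by rw [← hx₂]; linarith)) ?_⟩
  rw [← hx₂]
  exact congrArg Prod.fst hfix

theorem stmt_14 (dl dr dg : ℕ) (hdl : 2 ≤ dl) (hdr : 3 ≤ dr) (hdg : 2 ≤ dg)
    (β : ℝ) (hβ : 0 < β) (ε : ℝ) (hε0 : 0 ≤ ε) (hε1 : ε ≤ 1)
    (x₁ x₂ : ℝ) (hx₁m : x₁ ∈ Set.Icc (0:ℝ) 1) (hx₂m : x₂ ∈ Set.Icc (0:ℝ) 1)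
    (hfix : DEmap dl dr dg β ε (x₁, x₂) = (x₁, x₂))
    (hx₁0 : 0 < x₁) (hx₁1 : x₁ < 1) :
    x₂ = x₁ * (1 - (1 - x₁)^(dr-1)) ∧
    ε = 1 + Real.log (x₁ / (1 - (1 - x₁)^(dr-1))^(dl-1))
          / (β * (1 - x₁ * (1 - (1 - x₁)^(dr-1)))^(dg-1)) :=
  stmt_14_general dl dr dg hdl hdr β hβ ε x₁ x₂ hfix hx₁0 hx₁1
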